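/- Let Γ be a stochastic game which admits an ergodic canonical form: there exist x ∈ ℝ^V and m ∈ ℝ with m^v(x) = m for all v ∈ V. Let α be a stationary strategy of player 1 such that α^v is an optimal maximin strategy in the matrix game A^v(x) for every v (i.e., min_{β̃∈Δ(L^v)} (α^v)ᵀ A^v(x) β̃ = m), and let β be a stationary strategy of player 2 such that β^v is an optimal minimax strategy in A^v(x) for every v (i.e., max_{α̃∈Δ(K^v)} α̃ᵀ A^v(x) β^v = m). Then for every initial position v ∈ V and all stationary strategies α' of player 1 and β' of player 2: g^v(α, β') ≥ m ≥ g^v(α', β); in particular g^v(α, β) = m for all v, so the game is solved in uniformly optimal stationary strategies with value m from every initial position. -/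

import Mathlib

/-! Fix the opponent's stationary strategy and write `Q`, `c` for the induced transition matrix
and reward vector. The transformed payoff of the pair at `v` is `d_v = c_v + x_v - (Q x)_v`,
so local optimality of `α` gives `d ≥ m` coordinatewise. Since `c = d - (x - Q x)`, the
`N`-step Cesàro mean of `c` is that of `d`, which is `≥ m` because every `Q ^ j` is
row-stochastic, minus the telescoped term `(x - Q ^ (N + 1) x) / (N + 1) = O(1 / N)`.
Hence the liminf is `≥ m`; the bound for `β` is symmetric. -/

open Filter Matrix

/-- The value of a finite zero-sum matrix game:
`Val(A) = max_{α ∈ Δ(K)} min_{β ∈ Δ(L)} αᵀ A β`. -/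
noncomputable def matVal {K L : Type*} [Fintype K] [Fintype L]
    (A : Matrix K L ℝ) : ℝ :=
  ⨆ α : stdSimplex ℝ K, ⨅ β : stdSimplex ℝ L, ∑ k, ∑ l, α.1 k * A k l * β.1 l

variable {V : Type*} [Fintype V] [DecidableEq V] [Nonempty V]
  {K L : V → Type*} [∀ v, Fintype (K v)] [∀ v, Nonempty (K v)]
  [∀ v, Fintype (L v)] [∀ v, Nonempty (L v)]

/-- The potential-transformed local reward matrix `A^v(x)`:
`a^v_{kℓ}(x) = ∑_u p^{vu}_{kℓ} (r^{vu}_{kℓ} + x^v − x^u)`. -/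
noncomputable def locMat (p r : ∀ v : V, K v → L v → V → ℝ) (x : V → ℝ) (v : V) :
    Matrix (K v) (L v) ℝ :=
  Matrix.of fun k l => ∑ u, p v k l u * (r v k l u + x v - x u)

/-- The local value `m^v(x) = Val(A^v(x))`. -/
noncomputable def locVal (p r : ∀ v : V, K v → L v → V → ℝ) (x : V → ℝ) (v : V) : ℝ :=
  matVal (locMat p r x v)

/-- The transition matrix `Q(α,β)` induced by a pair of stationary strategies. -/
noncomputable def Qmat (p : ∀ v : V, K v → L v → V → ℝ)
    (α : ∀ v, K v → ℝ) (β : ∀ v, L v → ℝ) : Matrix V V ℝ :=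
  Matrix.of fun v u => ∑ k, ∑ l, α v k * β v l * p v k l u

/-- The expected one-step reward vector `c(α,β)` induced by stationary
strategies. -/
noncomputable def cvec (p r : ∀ v : V, K v → L v → V → ℝ)
    (α : ∀ v, K v → ℝ) (β : ∀ v, L v → ℝ) : V → ℝ :=
  fun v => ∑ k, ∑ l, α v k * β v l * ∑ u, p v k l u * r v k l u

/-- The limiting average payoff `g^v(α,β)` from initial position `v`. -/
noncomputable def gval (p r : ∀ v : V, K v → L v → V → ℝ)
    (α : ∀ v, K v → ℝ) (β : ∀ v, L v → ℝ) (v : V) : ℝ :=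
  liminf (fun N : ℕ => (1 / (N + 1 : ℝ)) * ∑ j ∈ Finset.range (N + 1),
    ((Qmat p α β ^ j).mulVec (cvec p r α β)) v) atTop

open Finset Topology

section RowStochastic

variable {ι : Type*} [Fintype ι] [DecidableEq ι] {Q : Matrix ι ι ℝ}

theorem le_mulVec_of_mem_rowStochastic (hQ : Q ∈ rowStochastic ℝ ι) {d : ι → ℝ} {m : ℝ}
    (hd : ∀ u, m ≤ d u) (v : ι) : m ≤ (Q *ᵥ d) v := by
  have h := nonneg_mulVec_of_mem_rowStochastic hQ (x := d - m • 1)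
    (fun u => sub_nonneg.2 (by simpa using hd u)) v
  rw [mulVec_sub, mulVec_smul, one_vecMul_of_mem_rowStochastic hQ] at h
  simpa using h

theorem mulVec_le_of_mem_rowStochastic (hQ : Q ∈ rowStochastic ℝ ι) {d : ι → ℝ} {m : ℝ}
    (hd : ∀ u, d u ≤ m) (v : ι) : (Q *ᵥ d) v ≤ m := by
  have h := le_mulVec_of_mem_rowStochastic hQ (d := -d) (m := -m)
    (fun u => neg_le_neg (hd u)) v
  rwa [mulVec_neg, Pi.neg_apply, neg_le_neg_iff] at h

theorem abs_mulVec_le_of_mem_rowStochastic (hQ : Q ∈ rowStochastic ℝ ι) (x : ι → ℝ) (v : ι) :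
    |(Q *ᵥ x) v| ≤ ‖x‖ := by
  have hx : ∀ u, |x u| ≤ ‖x‖ := fun u => by simpa using norm_le_pi_norm x u
  exact abs_le.2 ⟨le_mulVec_of_mem_rowStochastic hQ (fun u => (abs_le.1 (hx u)).1) v,
    mulVec_le_of_mem_rowStochastic hQ (fun u => (abs_le.1 (hx u)).2) v⟩

end RowStochastic

section Cesaro

variable {ι : Type*} [Fintype ι] [DecidableEq ι]

noncomputable def cesaroMean (Q : Matrix ι ι ℝ) (c : ι → ℝ) (N : ℕ) (v : ι) : ℝ :=
  (1 / (N + 1 : ℝ)) * ∑ j ∈ range (N + 1), ((Q ^ j) *ᵥ c) v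

theorem sum_range_pow_mulVec_sub_mulVec (Q : Matrix ι ι ℝ) (x : ι → ℝ) (n : ℕ) :
    ∑ j ∈ range n, (Q ^ j) *ᵥ (x - Q *ᵥ x) = x - (Q ^ n) *ᵥ x := by
  have h : ∀ j, (Q ^ j) *ᵥ (x - Q *ᵥ x) = (Q ^ j) *ᵥ x - (Q ^ (j + 1)) *ᵥ x := fun j => by
    rw [mulVec_sub, mulVec_mulVec, ← pow_succ]
  simp only [h, sum_range_sub', pow_zero, one_mulVec]

theorem cesaroMean_add_sub_mulVec (Q : Matrix ι ι ℝ) (c x : ι → ℝ) (N : ℕ) (v : ι) :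
    cesaroMean Q (c + (x - Q *ᵥ x)) N v
      = cesaroMean Q c N v + (x v - ((Q ^ (N + 1)) *ᵥ x) v) / (N + 1) := by
  have h := congrFun (sum_range_pow_mulVec_sub_mulVec Q x (N + 1)) v
  simp only [Finset.sum_apply, Pi.sub_apply] at h
  simp only [cesaroMean, mulVec_add, Pi.add_apply, sum_add_distrib, h]
  ring

variable {Q : Matrix ι ι ℝ}

theorem le_cesaroMean_of_mem_rowStochastic (hQ : Q ∈ rowStochastic ℝ ι)
    {c : ι → ℝ} {m : ℝ} (hc : ∀ u, m ≤ c u) (N : ℕ) (v : ι) : m ≤ cesaroMean Q c N v := by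
  have hsum : (N + 1 : ℝ) * m ≤ ∑ j ∈ range (N + 1), ((Q ^ j) *ᵥ c) v := by
    simpa using card_nsmul_le_sum (range (N + 1)) _ m
      (fun j _ => le_mulVec_of_mem_rowStochastic (pow_mem hQ j) hc v)
  rw [cesaroMean, one_div, le_inv_mul_iff₀ (by positivity)]
  linarith

theorem cesaroMean_le_of_mem_rowStochastic (hQ : Q ∈ rowStochastic ℝ ι)
    {c : ι → ℝ} {m : ℝ} (hc : ∀ u, c u ≤ m) (N : ℕ) (v : ι) : cesaroMean Q c N v ≤ m := by
  have hsum : ∑ j ∈ range (N + 1), ((Q ^ j) *ᵥ c) v ≤ (N + 1 : ℝ) * m := by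
    simpa using sum_le_card_nsmul (range (N + 1)) _ m
      (fun j _ => mulVec_le_of_mem_rowStochastic (pow_mem hQ j) hc v)
  rw [cesaroMean, one_div, inv_mul_le_iff₀ (by positivity)]
  linarith

theorem abs_cesaroMean_le (hQ : Q ∈ rowStochastic ℝ ι) (c : ι → ℝ) (N : ℕ) (v : ι) :
    |cesaroMean Q c N v| ≤ ‖c‖ := by
  have hc : ∀ u, |c u| ≤ ‖c‖ := fun u => by simpa using norm_le_pi_norm c u
  exact abs_le.2 ⟨le_cesaroMean_of_mem_rowStochastic hQ (fun u => (abs_le.1 (hc u)).1) N v,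
    cesaroMean_le_of_mem_rowStochastic hQ (fun u => (abs_le.1 (hc u)).2) N v⟩

theorem tendsto_div_succ_sub_pow_mulVec (hQ : Q ∈ rowStochastic ℝ ι) (x : ι → ℝ) (v : ι) :
    Tendsto (fun N : ℕ => (x v - ((Q ^ (N + 1)) *ᵥ x) v) / (N + 1)) atTop (𝓝 0) := by
  have hbound (N : ℕ) :
      ‖(x v - ((Q ^ (N + 1)) *ᵥ x) v) / (N + 1)‖ ≤ 2 * ‖x‖ * (1 / (N + 1)) := by
    have h1 := abs_mulVec_le_of_mem_rowStochastic (pow_mem hQ (N + 1)) x v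
    have h2 : |x v| ≤ ‖x‖ := by simpa using norm_le_pi_norm x v
    rw [Real.norm_eq_abs, abs_div, abs_of_pos (by positivity : (0 : ℝ) < N + 1),
      div_eq_mul_one_div]
    gcongr
    linarith [abs_sub (x v) (((Q ^ (N + 1)) *ᵥ x) v)]
  exact squeeze_zero_norm hbound
    (by simpa using tendsto_one_div_add_atTop_nhds_zero_nat.const_mul (2 * ‖x‖))

theorem le_liminf_cesaroMean (hQ : Q ∈ rowStochastic ℝ ι) {c x : ι → ℝ} {m : ℝ}
    (h : ∀ u, m ≤ c u + x u - (Q *ᵥ x) u) (v : ι) :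
    m ≤ liminf (fun N => cesaroMean Q c N v) atTop := by
  set e := fun N : ℕ => (x v - ((Q ^ (N + 1)) *ᵥ x) v) / (N + 1)
  have hlower : ∀ N, m - e N ≤ cesaroMean Q c N v := fun N => by
    have := le_cesaroMean_of_mem_rowStochastic hQ (c := c + (x - Q *ᵥ x)) (m := m)
      (fun u => by simpa [add_sub_assoc] using h u) N v
    rw [cesaroMean_add_sub_mulVec] at this
    linarith
  have hlim : Tendsto (fun N => m - e N) atTop (𝓝 m) := by
    simpa using (tendsto_div_succ_sub_pow_mulVec hQ x v).const_sub m
  have hupper (N : ℕ) : cesaroMean Q c N v ≤ ‖c‖ := (abs_le.1 (abs_cesaroMean_le hQ c N v)).2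
  calc m = liminf (fun N => m - e N) atTop := hlim.liminf_eq.symm
    _ ≤ liminf (fun N => cesaroMean Q c N v) atTop :=
      liminf_le_liminf (Eventually.of_forall hlower) hlim.isBoundedUnder_ge
        (isCoboundedUnder_ge_of_le atTop hupper)

theorem liminf_cesaroMean_le (hQ : Q ∈ rowStochastic ℝ ι) {c x : ι → ℝ} {m : ℝ}
    (h : ∀ u, c u + x u - (Q *ᵥ x) u ≤ m) (v : ι) :
    liminf (fun N => cesaroMean Q c N v) atTop ≤ m := by
  set e := fun N : ℕ => (x v - ((Q ^ (N + 1)) *ᵥ x) v) / (N + 1)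
  have hupper : ∀ N, cesaroMean Q c N v ≤ m - e N := fun N => by
    have := cesaroMean_le_of_mem_rowStochastic hQ (c := c + (x - Q *ᵥ x)) (m := m)
      (fun u => by simpa [add_sub_assoc] using h u) N v
    rw [cesaroMean_add_sub_mulVec] at this
    linarith
  have hlim : Tendsto (fun N => m - e N) atTop (𝓝 m) := by
    simpa using (tendsto_div_succ_sub_pow_mulVec hQ x v).const_sub m
  have hlower (N : ℕ) : -‖c‖ ≤ cesaroMean Q c N v := (abs_le.1 (abs_cesaroMean_le hQ c N v)).1
  calc liminf (fun N => cesaroMean Q c N v) atTop ≤ liminf (fun N => m - e N) atTop :=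
      liminf_le_liminf (Eventually.of_forall hupper) (isBoundedUnder_of ⟨-‖c‖, hlower⟩)
        hlim.isBoundedUnder_le.isCoboundedUnder_ge
    _ = m := hlim.liminf_eq

end Cesaro

section Game

omit [Nonempty V] [∀ v, Nonempty (K v)] [∀ v, Nonempty (L v)]

variable {p r : ∀ v : V, K v → L v → V → ℝ} {α : ∀ v, K v → ℝ} {β : ∀ v, L v → ℝ}

theorem Qmat_mem_rowStochastic (hp0 : ∀ v k l u, 0 ≤ p v k l u)
    (hp1 : ∀ v k l, ∑ u, p v k l u = 1) (hα : ∀ v, α v ∈ stdSimplex ℝ (K v))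
    (hβ : ∀ v, β v ∈ stdSimplex ℝ (L v)) : Qmat p α β ∈ rowStochastic ℝ V := by
  refine mem_rowStochastic_iff_sum.2 ⟨fun v u => ?_, fun v => ?_⟩
  · exact sum_nonneg fun k _ => sum_nonneg fun l _ =>
      mul_nonneg (mul_nonneg ((hα v).1 k) ((hβ v).1 l)) (hp0 v k l u)
  · simp only [Qmat, of_apply]
    calc ∑ u, ∑ k, ∑ l, α v k * β v l * p v k l u
        = ∑ k, ∑ l, α v k * β v l * ∑ u, p v k l u := by
          rw [sum_comm]; exact sum_congr rfl fun k _ => by rw [sum_comm]; simp only [mul_sum]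
      _ = 1 := by simp only [hp1, mul_one, ← mul_sum, (hβ v).2, (hα v).2]

omit [DecidableEq V] in
theorem sum_mul_locMat_mul_eq (hp1 : ∀ v k l, ∑ u, p v k l u = 1) (x : V → ℝ)
    (hα : ∀ v, ∑ k, α v k = 1) (hβ : ∀ v, ∑ l, β v l = 1) (v : V) :
    ∑ k, ∑ l, α v k * locMat p r x v k l * β v l
      = cvec p r α β v + x v - (Qmat p α β *ᵥ x) v := by
  have hx : x v = ∑ k, ∑ l, α v k * β v l * ∑ u, p v k l u * x v := by
    simp only [← sum_mul, hp1, one_mul, ← mul_sum, hβ v, hα v]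
  have hQ : (Qmat p α β *ᵥ x) v = ∑ k, ∑ l, α v k * β v l * ∑ u, p v k l u * x u := by
    simp only [mulVec, dotProduct, Qmat, of_apply, sum_mul, mul_sum]
    rw [sum_comm]
    exact sum_congr rfl fun k _ => by rw [sum_comm]; simp only [mul_assoc]
  calc ∑ k, ∑ l, α v k * locMat p r x v k l * β v l
      = ∑ k, ∑ l, α v k * β v l * ∑ u, p v k l u * (r v k l u + x v - x u) := by
        refine sum_congr rfl fun k _ => sum_congr rfl fun l _ => ?_
        simp only [locMat, of_apply]
        ring
    _ = cvec p r α β v + (∑ k, ∑ l, α v k * β v l * ∑ u, p v k l u * x v)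
          - ∑ k, ∑ l, α v k * β v l * ∑ u, p v k l u * x u := by
        simp only [cvec, mul_add, mul_sub, sum_add_distrib, sum_sub_distrib]
    _ = cvec p r α β v + x v - (Qmat p α β *ᵥ x) v := by rw [← hx, hQ]

theorem le_gval_of_le_sum_mul_locMat_mul (hp0 : ∀ v k l u, 0 ≤ p v k l u)
    (hp1 : ∀ v k l, ∑ u, p v k l u = 1) (hα : ∀ v, α v ∈ stdSimplex ℝ (K v))
    (hβ : ∀ v, β v ∈ stdSimplex ℝ (L v)) {x : V → ℝ} {m : ℝ}
    (h : ∀ w, m ≤ ∑ k, ∑ l, α w k * locMat p r x w k l * β w l) (v : V) :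
    m ≤ gval p r α β v :=
  le_liminf_cesaroMean (Qmat_mem_rowStochastic hp0 hp1 hα hβ)
    (fun w => sum_mul_locMat_mul_eq hp1 x (fun v => (hα v).2) (fun v => (hβ v).2) w ▸ h w) v

theorem gval_le_of_sum_mul_locMat_mul_le (hp0 : ∀ v k l u, 0 ≤ p v k l u)
    (hp1 : ∀ v k l, ∑ u, p v k l u = 1) (hα : ∀ v, α v ∈ stdSimplex ℝ (K v))
    (hβ : ∀ v, β v ∈ stdSimplex ℝ (L v)) {x : V → ℝ} {m : ℝ}
    (h : ∀ w, ∑ k, ∑ l, α w k * locMat p r x w k l * β w l ≤ m) (v : V) :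
    gval p r α β v ≤ m :=
  liminf_cesaroMean_le (Qmat_mem_rowStochastic hp0 hp1 hα hβ)
    (fun w => sum_mul_locMat_mul_eq hp1 x (fun v => (hα v).2) (fun v => (hβ v).2) w ▸ h w) v

end Game

theorem ergodic_canonical_form_solves_game_general
    (p r : ∀ v : V, K v → L v → V → ℝ)
    (hp0 : ∀ v k l u, 0 ≤ p v k l u) (hp1 : ∀ v k l, ∑ u, p v k l u = 1)
    (x : V → ℝ) (m : ℝ)
    (α : ∀ v, K v → ℝ) (hα : ∀ v, α v ∈ stdSimplex ℝ (K v))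
    (hαopt : ∀ v, ∀ βt ∈ stdSimplex ℝ (L v),
      m ≤ ∑ k, ∑ l, α v k * locMat p r x v k l * βt l)
    (β : ∀ v, L v → ℝ) (hβ : ∀ v, β v ∈ stdSimplex ℝ (L v))
    (hβopt : ∀ v, ∀ αt ∈ stdSimplex ℝ (K v),
      ∑ k, ∑ l, αt k * locMat p r x v k l * β v l ≤ m) :
    (∀ β' : ∀ v, L v → ℝ, (∀ v, β' v ∈ stdSimplex ℝ (L v)) →
      ∀ v, m ≤ gval p r α β' v) ∧
    (∀ α' : ∀ v, K v → ℝ, (∀ v, α' v ∈ stdSimplex ℝ (K v)) →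
      ∀ v, gval p r α' β v ≤ m) ∧
    (∀ v, gval p r α β v = m) := by
  have hα_guarantees : ∀ β' : ∀ v, L v → ℝ, (∀ v, β' v ∈ stdSimplex ℝ (L v)) →
      ∀ v, m ≤ gval p r α β' v := fun β' hβ' =>
    le_gval_of_le_sum_mul_locMat_mul hp0 hp1 hα hβ' fun w => hαopt w (β' w) (hβ' w)
  have hβ_guarantees : ∀ α' : ∀ v, K v → ℝ, (∀ v, α' v ∈ stdSimplex ℝ (K v)) →
      ∀ v, gval p r α' β v ≤ m := fun α' hα' =>
    gval_le_of_sum_mul_locMat_mul_le hp0 hp1 hα' hβ fun w => hβopt w (α' w) (hα' w)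
  exact ⟨hα_guarantees, hβ_guarantees,
    fun v => le_antisymm (hβ_guarantees α hα v) (hα_guarantees β hβ v)⟩

/-- if a potential `x` brings the game to its ergodic canonical
form (`m^v(x) = m` for all `v`), and `α`, `β` are stationary strategies that
are locally optimal in every transformed matrix game `A^v(x)`, then they are
uniformly optimal: `g^v(α, β') ≥ m ≥ g^v(α', β)` for all stationary `α'`, `β'`
and all `v`; in particular `g^v(α, β) = m` for every initial position `v`. -/
theorem ergodic_canonical_form_solves_game
    (p r : ∀ v : V, K v → L v → V → ℝ)
    (hp0 : ∀ v k l u, 0 ≤ p v k l u) (hp1 : ∀ v k l, ∑ u, p v k l u = 1)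
    (x : V → ℝ) (m : ℝ)
    (hcanon : ∀ v, locVal p r x v = m)
    (α : ∀ v, K v → ℝ) (hα : ∀ v, α v ∈ stdSimplex ℝ (K v))
    (hαopt : ∀ v, ∀ βt ∈ stdSimplex ℝ (L v),
      m ≤ ∑ k, ∑ l, α v k * locMat p r x v k l * βt l)
    (β : ∀ v, L v → ℝ) (hβ : ∀ v, β v ∈ stdSimplex ℝ (L v))
    (hβopt : ∀ v, ∀ αt ∈ stdSimplex ℝ (K v),
      ∑ k, ∑ l, αt k * locMat p r x v k l * β v l ≤ m) :
    (∀ β' : ∀ v, L v → ℝ, (∀ v, β' v ∈ stdSimplex ℝ (L v)) →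
      ∀ v, m ≤ gval p r α β' v) ∧
    (∀ α' : ∀ v, K v → ℝ, (∀ v, α' v ∈ stdSimplex ℝ (K v)) →
      ∀ v, gval p r α' β v ≤ m) ∧
    (∀ v, gval p r α β v = m) :=
  ergodic_canonical_form_solves_game_general p r hp0 hp1 x m α hα hαopt β hβ hβopt
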